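/- Let S₁, …, S_{n+1} be i.i.d. real random variables. Then for each k ∈ {1, …, n+1}, the probability that S_{n+1} is among the k smallest values (i.e., at most the k-th order statistic of all n+1 values) is at least k/(n+1). If the variables are almost surely distinct, this probability equals k/(n+1). -/

import Mathlib

open MeasureTheory ProbabilityTheory

/-- The `i`-th order statistic (in increasing order) of a finite tuple of reals. -/
noncomputable def orderStat {n : ℕ} (x : Fin n → ℝ) (i : Fin n) : ℝ :=
  x (Tuple.sort x i)

open Finset
open scoped ENNReal

/-! The law of an i.i.d. vector is invariant under permutations of its coordinates, so the
events `#{j | S j < S i} ≤ k - 1` all have the same probability `p`, and `(n + 1) p` is the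
expected number of coordinates whose rank is at most `k - 1`. For every outcome at least `k`
coordinates qualify (the first `k` entries of the sorted tuple), and exactly `k` when the
entries are distinct. Finally, `S (n + 1)` is at most the `k`-th order statistic iff its rank
is at most `k - 1`. -/

lemma Finset.card_filter_comp_perm {ι : Type*} [Fintype ι] (σ : Equiv.Perm ι) (p : ι → Prop)
    [DecidablePred p] : #{j | p (σ j)} = #{j | p j} :=
  card_equiv σ (by simp)

section StrictRank

variable {ι α : Type*} [Fintype ι] [LinearOrder α]

def strictRank (x : ι → α) (i : ι) : ℕ := #{j | x j < x i}

lemma strictRank_comp_perm (x : ι → α) (σ : Equiv.Perm ι) (i : ι) :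
    strictRank (x ∘ σ) i = strictRank x (σ i) :=
  card_filter_comp_perm σ (x · < x (σ i))

lemma measurable_strictRank [TopologicalSpace α] [OrderClosedTopology α]
    [SecondCountableTopology α] [MeasurableSpace α] [OpensMeasurableSpace α] (i : ι) :
    Measurable fun x : ι → α => strictRank x i := by
  classical
  simp only [strictRank, card_filter]
  exact Finset.measurable_sum _ fun j _ => Measurable.ite
    (measurableSet_lt (measurable_pi_apply j) (measurable_pi_apply i))
    measurable_const measurable_const

end StrictRank

section OrderStat

variable {n : ℕ}

lemma le_orderStat_iff (x : Fin n → ℝ) (t : ℝ) (i : Fin n) :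
    t ≤ orderStat x i ↔ #{j | x j < t} ≤ i := by
  rw [orderStat, ← not_lt, ← card_filter_comp_perm (Tuple.sort x)]
  exact (Tuple.lt_card_lt_iff_apply_lt_of_monotone (Tuple.monotone_sort x)).not.symm.trans not_lt

lemma strictRank_le_iff_le_orderStat (x : Fin n → ℝ) (i m : Fin n) :
    strictRank x i ≤ m ↔ x i ≤ orderStat x m :=
  (le_orderStat_iff x (x i) m).symm

lemma succ_le_card_le_orderStat (x : Fin n → ℝ) (m : Fin n) :
    (m : ℕ) + 1 ≤ #{i | x i ≤ orderStat x m} := by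
  rw [← card_filter_comp_perm (Tuple.sort x), ← Fin.card_Iic]
  refine card_le_card fun j hj => ?_
  rw [mem_filter_univ]
  exact Tuple.monotone_sort x (mem_Iic.mp hj)

lemma card_le_orderStat_of_injective {x : Fin n → ℝ} (hx : Function.Injective x) (m : Fin n) :
    #{i | x i ≤ orderStat x m} = m + 1 := by
  have hstrict : StrictMono (x ∘ Tuple.sort x) :=
    (Tuple.monotone_sort x).strictMono_of_injective (hx.comp (Tuple.sort x).injective)
  rw [← card_filter_comp_perm (Tuple.sort x), ← Fin.card_Iic]
  congr 1
  ext j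
  rw [mem_filter_univ, mem_Iic]
  exact hstrict.le_iff_le

lemma succ_le_card_strictRank_le (x : Fin n → ℝ) (m : Fin n) :
    (m : ℕ) + 1 ≤ #{i | strictRank x i ≤ m} := by
  simpa only [strictRank_le_iff_le_orderStat] using succ_le_card_le_orderStat x m

lemma card_strictRank_le_of_injective {x : Fin n → ℝ} (hx : Function.Injective x) (m : Fin n) :
    #{i | strictRank x i ≤ m} = m + 1 := by
  simpa only [strictRank_le_iff_le_orderStat] using card_le_orderStat_of_injective hx m

end OrderStat

lemma MeasureTheory.sum_measure_setOf_eq_lintegral_card {Ω ι : Type*} [MeasurableSpace Ω]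
    [Fintype ι] {P : Measure Ω} {p : ι → Ω → Prop} [∀ i, DecidablePred (p i)]
    (hp : ∀ i, MeasurableSet {ω | p i ω}) :
    ∑ i, P {ω | p i ω} = ∫⁻ ω, (#{i | p i ω} : ℝ≥0∞) ∂P := calc
  ∑ i, P {ω | p i ω} = ∑ i, ∫⁻ ω, {ω | p i ω}.indicator 1 ω ∂P := by
    simp_rw [lintegral_indicator_one (hp _)]
  _ = ∫⁻ ω, ∑ i, {ω | p i ω}.indicator 1 ω ∂P :=
    (lintegral_finsetSum _ fun i _ => measurable_one.indicator (hp i)).symm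
  _ = _ := lintegral_congr fun ω => by simp [Set.indicator_apply]

namespace ProbabilityTheory

variable {Ω ι : Type*} [MeasurableSpace Ω] [Fintype ι] {P : Measure Ω}

lemma iIndepFun.measure_preimage_comp_perm {β : Type*} [MeasurableSpace β] {X : ι → Ω → β}
    (hX : ∀ i, Measurable (X i)) (hindep : iIndepFun X P)
    (hident : ∀ i j, P.map (X i) = P.map (X j)) (σ : Equiv.Perm ι) {B : Set (ι → β)}
    (hB : MeasurableSet B) :
    P ((fun ω i => X (σ i) ω) ⁻¹' B) = P ((fun ω i => X i ω) ⁻¹' B) := by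
  have hlaw : P.map (fun ω i => X (σ i) ω) = P.map (fun ω i => X i ω) := by
    rw [(hindep.precomp σ.injective).map_fun_eq_pi_map fun i => (hX (σ i)).aemeasurable,
      hindep.map_fun_eq_pi_map fun i => (hX i).aemeasurable]
    exact congrArg Measure.pi (funext fun i => hident _ _)
  rw [← Measure.map_apply (measurable_pi_lambda _ fun i => hX (σ i)) hB, hlaw,
    Measure.map_apply (measurable_pi_lambda _ hX) hB]

variable {α : Type*} [LinearOrder α] [TopologicalSpace α] [OrderClosedTopology α]
  [SecondCountableTopology α] [MeasurableSpace α] [OpensMeasurableSpace α]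
  {X : ι → Ω → α}

lemma iIndepFun.measure_strictRank_le_eq (hX : ∀ i, Measurable (X i))
    (hindep : iIndepFun X P) (hident : ∀ i j, P.map (X i) = P.map (X j)) (m : ℕ) (i j : ι) :
    P {ω | strictRank (X · ω) i ≤ m} = P {ω | strictRank (X · ω) j ≤ m} := by
  classical
  have hB : MeasurableSet {x : ι → α | strictRank x j ≤ m} :=
    measurableSet_le (measurable_strictRank j) measurable_const
  have hpre : (fun ω k => X (Equiv.swap i j k) ω) ⁻¹' {x | strictRank x j ≤ m}
      = {ω | strictRank (X · ω) i ≤ m} := by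
    ext ω
    show strictRank ((X · ω) ∘ Equiv.swap i j) j ≤ m ↔ _
    rw [strictRank_comp_perm, Equiv.swap_apply_right]; rfl
  rw [← hpre]
  exact hindep.measure_preimage_comp_perm hX hident _ hB

lemma iIndepFun.card_mul_measure_strictRank_le (hX : ∀ i, Measurable (X i))
    (hindep : iIndepFun X P) (hident : ∀ i j, P.map (X i) = P.map (X j)) (m : ℕ) (i₀ : ι) :
    (Fintype.card ι : ℝ≥0∞) * P {ω | strictRank (X · ω) i₀ ≤ m}
      = ∫⁻ ω, (#{i | strictRank (X · ω) i ≤ m} : ℝ≥0∞) ∂P := by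
  rw [← sum_measure_setOf_eq_lintegral_card (p := fun i ω => strictRank (X · ω) i ≤ m)
    fun i => measurableSet_le ((measurable_strictRank i).comp (measurable_pi_lambda _ hX))
      measurable_const]
  simp [hindep.measure_strictRank_le_eq hX hident m _ i₀]

end ProbabilityTheory

lemma ae_injective_of_measure_pairwise_ne {Ω ι β : Type*} [MeasurableSpace Ω] [Countable ι]
    [MeasurableSpace β] [MeasurableEq β] {P : Measure Ω} [IsProbabilityMeasure P]
    {X : ι → Ω → β} (hX : ∀ i, Measurable (X i))
    (h : P {ω | ∀ i j, i ≠ j → X i ω ≠ X j ω} = 1) :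
    ∀ᵐ ω ∂P, Function.Injective (X · ω) := by
  have hmeas : MeasurableSet {ω | ∀ i j, i ≠ j → X i ω ≠ X j ω} := by
    simp only [Set.ofPred_forall]
    exact .iInter fun i => .iInter fun j => .iInter fun _ =>
      (measurableSet_eq_fun (hX i) (hX j)).compl
  filter_upwards [(ae_iff_measure_eq hmeas.nullMeasurableSet).mpr (h.trans measure_univ.symm)]
    with ω hω
  exact fun i j hij => by_contra fun hne => hω i j hne hij

lemma ENNReal.ofReal_natCast_div_natCast_add_one (k n : ℕ) :
    ENNReal.ofReal ((k : ℝ) / (n + 1)) = k / (n + 1) := by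
  rw [ENNReal.ofReal_div_of_pos (by positivity)]
  norm_cast

/-- Rank lemma for i.i.d. scores: `S (n+1)` is at most the `k`-th order statistic of all
`n+1` values with probability at least `k/(n+1)`, with equality when the values are
almost surely pairwise distinct. -/
theorem iid_rank_bound {Ω : Type*} [MeasurableSpace Ω]
    (P : Measure Ω) [IsProbabilityMeasure P] (n : ℕ)
    (S : Fin (n + 1) → Ω → ℝ) (hmeas : ∀ i, Measurable (S i))
    (hindep : iIndepFun S P)
    (hident : ∀ i, P.map (S i) = P.map (S 0))
    (k : ℕ) (hk1 : 1 ≤ k) (hk : k ≤ n + 1) :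
    ENNReal.ofReal ((k : ℝ) / (n + 1)) ≤
      P {ω | S (Fin.last n) ω ≤ orderStat (fun i => S i ω) ⟨k - 1, by omega⟩} ∧
    (P {ω | ∀ i j : Fin (n + 1), i ≠ j → S i ω ≠ S j ω} = 1 →
      P {ω | S (Fin.last n) ω ≤ orderStat (fun i => S i ω) ⟨k - 1, by omega⟩} =
        ENNReal.ofReal ((k : ℝ) / (n + 1))) := by
  set m : Fin (n + 1) := ⟨k - 1, by omega⟩
  have hmk : (m : ℕ) + 1 = k := by simp only [m]; omega
  have hevent : {ω | S (Fin.last n) ω ≤ orderStat (fun i => S i ω) m}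
      = {ω | strictRank (S · ω) (Fin.last n) ≤ m} :=
    Set.ext fun ω => (strictRank_le_iff_le_orderStat (S · ω) _ _).symm
  have hcount := hindep.card_mul_measure_strictRank_le hmeas
    (fun i j => (hident i).trans (hident j).symm) m (Fin.last n)
  rw [Fintype.card_fin, Nat.cast_add, Nat.cast_one, mul_comm] at hcount
  rw [hevent, ENNReal.ofReal_natCast_div_natCast_add_one]
  refine ⟨?_, fun hdistinct => ?_⟩
  · rw [ENNReal.div_le_iff (by simp) (by simp), hcount, ← hmk]
    calc ((m + 1 : ℕ) : ℝ≥0∞) = ∫⁻ _, ((m + 1 : ℕ) : ℝ≥0∞) ∂P := by simp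
      _ ≤ _ := lintegral_mono fun ω => Nat.cast_le.mpr (succ_le_card_strictRank_le (S · ω) m)
  · rw [ENNReal.eq_div_iff (by simp) (by simp), mul_comm, hcount, ← hmk]
    calc ∫⁻ ω, (#{i | strictRank (S · ω) i ≤ m} : ℝ≥0∞) ∂P
        = ∫⁻ _, ((m + 1 : ℕ) : ℝ≥0∞) ∂P := lintegral_congr_ae <| by
          filter_upwards [ae_injective_of_measure_pairwise_ne hmeas hdistinct] with ω hω
          exact_mod_cast card_strictRank_le_of_injective hω m
      _ = _ := by simp
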